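/- arXiv:1412.6888 — 2 statements merged into one kernel-verified Lean document; each statement's English description precedes it below -/
import Mathlib

section
/- Let A be an abelian group, Λ a set of primes, and N(Λ) the multiplicative monoid of positive integers all of whose prime divisors lie in Λ. Let {B_m}_{m∈N(Λ)} be a projective system of abelian groups (indexed by divisibility) and {φ_m : A/mA → B_m} a morphism of projective systems. Suppose (a) every φ_m is injective, and (b) there exists N ∈ N(Λ) such that N annihilates the torsion subgroup of B_Λ := lim_{m∈N(Λ)} B_m. Then the kernel of the natural map A → A_Λ := lim_{m∈N(Λ)} A/mA is l-divisible for every prime l ∈ Λ. -/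
/-- `NLam L m` : `m` is a positive integer all of whose prime divisors lie in `L`. -/
def NLam (L : Set ℕ) (m : ℕ) : Prop := 0 < m ∧ ∀ p : ℕ, p.Prime → p ∣ m → p ∈ L

/-- Multiplication by `m` as an additive homomorphism. -/
def smulHom (A : Type*) [AddCommGroup A] (m : ℕ) : A →+ A where
  toFun := fun x => m • x
  map_zero' := smul_zero m
  map_add' := fun a b => smul_add m a b

/-- The subgroup `mA` of `A`. -/
def smulSub (A : Type*) [AddCommGroup A] (m : ℕ) : AddSubgroup A := (smulHom A m).range

/-!
Write `x ∈ ⋂ₘ mA` as `x = (lⁿN) • y₀`. The classes `φ m ȳ₀` form a compatible family in `B_Λ`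
killed by `lⁿN`, because `(lⁿN) • ȳ₀ = x̄ = 0` in every `A/mA`. So `N` kills it, and injectivity of
the `φ m` puts `N • y₀` in every `mA`; then `y = N • y₀` is the required `lⁿ`-th divisor of `x`.
-/

theorem NLam.mul {L : Set ℕ} {a b : ℕ} (ha : NLam L a) (hb : NLam L b) : NLam L (a * b) :=
  ⟨Nat.mul_pos ha.1 hb.1, fun p hp hpd =>
    ((Nat.Prime.dvd_mul hp).1 hpd).elim (ha.2 p hp) (hb.2 p hp)⟩

theorem NLam.prime_pow {L : Set ℕ} {l : ℕ} (hl : l.Prime) (hlL : l ∈ L) (n : ℕ) :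
    NLam L (l ^ n) :=
  ⟨pow_pos hl.pos n, fun p hp hpd => by
    rwa [(Nat.prime_dvd_prime_iff_eq hp hl).1 (hp.dvd_of_dvd_pow hpd)]⟩

theorem nsmul_mem_smulSub_of_nsmul_mem_smulSub
    {A : Type*} [AddCommGroup A] (L : Set ℕ)
    (B : ℕ → Type*) [∀ m, AddCommGroup (B m)]
    (T : ∀ m m' : ℕ, m' ∣ m → (B m →+ B m'))
    (φ : ∀ m : ℕ, (A ⧸ smulSub A m) →+ B m)
    (hφinj : ∀ m : ℕ, NLam L m → Function.Injective (φ m))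
    (hφcompat : ∀ (m m' : ℕ) (h : m' ∣ m) (a : A),
      T m m' h (φ m (QuotientAddGroup.mk a)) = φ m' (QuotientAddGroup.mk a))
    (N : ℕ)
    (hNtor : ∀ b : (∀ m : {m : ℕ // NLam L m}, B m.1),
      (∀ (m m' : {m : ℕ // NLam L m}) (h : m'.1 ∣ m.1), T m.1 m'.1 h (b m) = b m') →
      (∃ k : ℕ, 0 < k ∧ ∀ m, k • b m = 0) → ∀ m, N • b m = 0)
    {k : ℕ} (hk : 0 < k) {y : A} (hy : ∀ m : ℕ, NLam L m → k • y ∈ smulSub A m) :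
    ∀ m : ℕ, NLam L m → N • y ∈ smulSub A m := by
  let b : ∀ m : {m : ℕ // NLam L m}, B m.1 := fun m => φ m.1 (QuotientAddGroup.mk y)
  have hb_torsion : ∀ m, k • b m = 0 := fun m => by
    rw [← map_nsmul, ← QuotientAddGroup.mk_nsmul,
      (QuotientAddGroup.eq_zero_iff _).2 (hy m.1 m.2), map_zero]
  have hNb := hNtor b (fun m m' h => hφcompat m.1 m'.1 h y) ⟨k, hk, hb_torsion⟩
  intro m hm
  rw [← QuotientAddGroup.eq_zero_iff]
  apply hφinj m hm
  rw [QuotientAddGroup.mk_nsmul, map_nsmul, map_zero]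
  exact hNb ⟨m, hm⟩

theorem kernel_to_limit_l_divisible_general
    {A : Type*} [AddCommGroup A] (L : Set ℕ) (hL : ∀ p ∈ L, p.Prime)
    (B : ℕ → Type*) [∀ m, AddCommGroup (B m)]
    (T : ∀ m m' : ℕ, m' ∣ m → (B m →+ B m'))
    (φ : ∀ m : ℕ, (A ⧸ smulSub A m) →+ B m)
    (hφinj : ∀ m : ℕ, NLam L m → Function.Injective (φ m))
    (hφcompat : ∀ (m m' : ℕ) (h : m' ∣ m) (a : A),
      T m m' h (φ m (QuotientAddGroup.mk a)) = φ m' (QuotientAddGroup.mk a))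
    (N : ℕ) (hN : NLam L N)
    (hNtor : ∀ b : (∀ m : {m : ℕ // NLam L m}, B m.1),
      (∀ (m m' : {m : ℕ // NLam L m}) (h : m'.1 ∣ m.1), T m.1 m'.1 h (b m) = b m') →
      (∃ k : ℕ, 0 < k ∧ ∀ m, k • b m = 0) → ∀ m, N • b m = 0)
    (l : ℕ) (hlL : l ∈ L) :
    ∀ x ∈ {x : A | ∀ m : ℕ, NLam L m → x ∈ smulSub A m}, ∀ n : ℕ, 1 ≤ n →
      ∃ y ∈ {x : A | ∀ m : ℕ, NLam L m → x ∈ smulSub A m}, l ^ n • y = x := by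
  intro x hx n _
  have hk : NLam L (l ^ n * N) := (NLam.prime_pow (hL l hlL) hlL n).mul hN
  obtain ⟨y₀, hy₀ : (l ^ n * N) • y₀ = x⟩ := hx _ hk
  refine ⟨N • y₀, ?_, by rw [smul_smul, hy₀]⟩
  exact nsmul_mem_smulSub_of_nsmul_mem_smulSub L B T φ hφinj hφcompat N hNtor hk.1
    (fun m hm => hy₀ ▸ hx m hm)

/-- Let `A` be an abelian group, `L` a set of primes, `{B m}` a projective system of
abelian groups indexed by `N(L)` (ordered by divisibility) and `φ m : A/mA → B m` a
morphism of projective systems with each `φ m` injective (for `m ∈ N(L)`).  If some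
`N ∈ N(L)` annihilates the torsion of `B_Λ = lim B m` (compatible families), then the
kernel of `A → A_Λ = lim A/mA`, i.e. `{x | x ∈ mA for all m ∈ N(L)}`, is `l`-divisible
for every prime `l ∈ L`. -/
theorem kernel_to_limit_l_divisible
    {A : Type*} [AddCommGroup A] (L : Set ℕ) (hL : ∀ p ∈ L, p.Prime)
    (B : ℕ → Type*) [∀ m, AddCommGroup (B m)]
    (T : ∀ m m' : ℕ, m' ∣ m → (B m →+ B m'))
    (hTid : ∀ (m : ℕ) (x : B m), T m m dvd_rfl x = x)
    (hTcomp : ∀ (m m' m'' : ℕ) (h : m' ∣ m) (h' : m'' ∣ m') (x : B m),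
      T m' m'' h' (T m m' h x) = T m m'' (h'.trans h) x)
    (φ : ∀ m : ℕ, (A ⧸ smulSub A m) →+ B m)
    (hφinj : ∀ m : ℕ, NLam L m → Function.Injective (φ m))
    (hφcompat : ∀ (m m' : ℕ) (h : m' ∣ m) (a : A),
      T m m' h (φ m (QuotientAddGroup.mk a)) = φ m' (QuotientAddGroup.mk a))
    (N : ℕ) (hN : NLam L N)
    (hNtor : ∀ b : (∀ m : {m : ℕ // NLam L m}, B m.1),
      (∀ (m m' : {m : ℕ // NLam L m}) (h : m'.1 ∣ m.1), T m.1 m'.1 h (b m) = b m') →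
      (∃ k : ℕ, 0 < k ∧ ∀ m, k • b m = 0) → ∀ m, N • b m = 0)
    (l : ℕ) (hlL : l ∈ L) :
    ∀ x ∈ {x : A | ∀ m : ℕ, NLam L m → x ∈ smulSub A m}, ∀ n : ℕ, 1 ≤ n →
      ∃ y ∈ {x : A | ∀ m : ℕ, NLam L m → x ∈ smulSub A m}, l ^ n • y = x :=
  kernel_to_limit_l_divisible_general L hL B T φ hφinj hφcompat N hN hNtor l hlL
end

section
/- Let K be a field and define the tame symbol with respect to a discrete valuation v : K× → ℤ with residue field k: ∂({f,g}) = (-1)^{v(f)v(g)} f^{v(g)} g^{-v(f)} mod m. Then ∂ is well-defined on K₂(K), i.e., the map K× × K× → k×, (f,g) ↦ (-1)^{v(f)v(g)} f^{v(g)} g^{-v(f)} mod m, is bimultiplicative and kills pairs (a, 1-a) for a ∈ K× \ {1}, hence factors through the Milnor K-group K₂(K). -/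
open scoped TensorProduct

/-- The Steinberg relations: the subgroup of `Kˣ ⊗ Kˣ` generated by `a ⊗ (1 - a)`. -/
def K2Rel (K : Type*) [Field K] :
    Submodule ℤ (TensorProduct ℤ (Additive Kˣ) (Additive Kˣ)) :=
  Submodule.span ℤ {x | ∃ (a : Kˣ) (h : (a : K) ≠ 1),
    x = Additive.ofMul a ⊗ₜ[ℤ] Additive.ofMul (Units.mk0 (1 - (a : K)) (sub_ne_zero.mpr (Ne.symm h)))}

/-- The Milnor K-group `K₂(K) = (Kˣ ⊗_ℤ Kˣ)/⟨a ⊗ (1-a)⟩`. -/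
abbrev K2 (K : Type*) [Field K] : Type _ :=
  TensorProduct ℤ (Additive Kˣ) (Additive Kˣ) ⧸ K2Rel K

/-- The symbol `{f, g} ∈ K₂(K)`. -/
noncomputable def K2.symbol {K : Type*} [Field K] (f g : Kˣ) : K2 K :=
  Submodule.Quotient.mk (Additive.ofMul f ⊗ₜ[ℤ] Additive.ofMul g)

/-!
Write `ord` for the additive valuation. The element `(-1)^(ord f * ord g) * f^(ord g) * g^(-ord f)`
has valuation zero and is bimultiplicative in `(f, g)` (a formal identity in the abelian group
`Kˣ`), and reduction mod `m` is a homomorphism on valuation-zero units, so the tame symbol is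
bimultiplicative and lifts to `Kˣ ⊗ Kˣ`. For the Steinberg relation one checks, using the
ultrametric inequality, that the symbol of `(a, 1 - a)` is a power of a unit `w = 1 - y` with
`ord y > 0`, hence of residue `1`: take `w = 1 - a` if `ord a > 0`, `w = a` if `ord (1 - a) > 0`,
`w = 1 - a⁻¹` if `ord a < 0`; if `ord a = ord (1 - a) = 0` the symbol is `1` itself.
-/

namespace TameSymbol

variable {K k : Type*} [Field K] [Field k] (v : Kˣ →* Multiplicative ℤ)

abbrev ord (f : Kˣ) : ℤ := Multiplicative.toAdd (v f)

@[simp] lemma ord_one : ord v 1 = 0 := by simp [ord]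

@[simp] lemma ord_mul (f g : Kˣ) : ord v (f * g) = ord v f + ord v g := by simp [ord]

@[simp] lemma ord_zpow (f : Kˣ) (n : ℤ) : ord v (f ^ n) = n * ord v f := by
  simp [ord, toAdd_zpow]

@[simp] lemma ord_inv (f : Kˣ) : ord v f⁻¹ = -ord v f := by simp [ord]

@[simp] lemma ord_neg_one : ord v (-1) = 0 := by
  have h : ord v ((-1) * (-1)) = 0 := by simp
  rw [ord_mul] at h
  omega

@[simp] lemma ord_neg (f : Kˣ) : ord v (-f) = ord v f := by
  rw [← neg_one_mul, ord_mul, ord_neg_one, zero_add]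

lemma mem_ker_iff_ord_eq_zero {u : Kˣ} : u ∈ v.ker ↔ ord v u = 0 := by
  rw [MonoidHom.mem_ker, ord, toAdd_eq_zero]

variable {v}

lemma ord_eq_of_add_eq_of_lt
    (hadd : ∀ f g h : Kˣ, (f : K) + g = h → min (ord v f) (ord v g) ≤ ord v h)
    {x y z : Kˣ} (hxyz : (x : K) + y = z) (hlt : ord v x < ord v y) : ord v z = ord v x := by
  have hz := hadd x y z hxyz
  have hx := hadd z (-y) x (by push_cast; linear_combination -hxyz)
  rw [ord_neg] at hx
  omega

lemma ord_eq_zero_of_add_eq_one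
    (hadd : ∀ f g h : Kˣ, (f : K) + g = h → min (ord v f) (ord v g) ≤ ord v h)
    {w y : Kˣ} (hwy : (w : K) + y = 1) (hy : 0 < ord v y) : ord v w = 0 := by
  simpa using ord_eq_of_add_eq_of_lt hadd (x := 1) (y := -y) (z := w)
    (by push_cast; linear_combination -hwy) (by simpa using hy)

section Residue

variable (O : Subring K)

lemma mem_of_mem_ker (hO : ∀ f : Kˣ, (f : K) ∈ O ↔ 0 ≤ ord v f) {u : Kˣ}
    (hu : u ∈ v.ker) : (u : K) ∈ O :=
  (hO u).2 ((mem_ker_iff_ord_eq_zero v).1 hu).ge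

variable (hO : ∀ f : Kˣ, (f : K) ∈ O ↔ 0 ≤ ord v f)

def kerToUnits : v.ker →* Oˣ where
  toFun u :=
    { val := ⟨((u : Kˣ) : K), mem_of_mem_ker O hO u.2⟩
      inv := ⟨((u⁻¹ : v.ker) : Kˣ), mem_of_mem_ker O hO u⁻¹.2⟩
      val_inv := Subtype.ext (by simp)
      inv_val := Subtype.ext (by simp) }
  map_one' := by ext; rfl
  map_mul' _ _ := by ext; rfl

variable (r : O →+* k)

noncomputable def residue : v.ker →* kˣ :=
  (Units.map r.toMonoidHom).comp (kerToUnits O hO)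

lemma coe_residue (u : v.ker) :
    (residue O hO r u : k) = r ⟨((u : Kˣ) : K), mem_of_mem_ker O hO u.2⟩ :=
  rfl

variable {O hO r}

lemma residue_eq_one_of_add_eq_one
    (hker : ∀ (f : Kˣ) (h : (f : K) ∈ O), r ⟨f, h⟩ = 0 ↔ 0 < ord v f)
    {u : v.ker} {y : Kˣ} (huy : ((u : Kˣ) : K) + y = 1) (hy : 0 < ord v y) :
    residue O hO r u = 1 := by
  have hyO : (y : K) ∈ O := (hO y).2 hy.le
  have hu : (⟨((u : Kˣ) : K), mem_of_mem_ker O hO u.2⟩ : O) = 1 - ⟨y, hyO⟩ :=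
    Subtype.ext (by push_cast; linear_combination huy)
  ext
  rw [coe_residue, hu, map_sub, map_one, (hker y hyO).2 hy, sub_zero, Units.val_one]

lemma residue_eq_one_of_eq_zpow
    (hadd : ∀ f g h : Kˣ, (f : K) + g = h → min (ord v f) (ord v g) ≤ ord v h)
    (hker : ∀ (f : Kˣ) (h : (f : K) ∈ O), r ⟨f, h⟩ = 0 ↔ 0 < ord v f)
    {w y : Kˣ} (hwy : (w : K) + y = 1) (hy : 0 < ord v y)
    {u : v.ker} {n : ℤ} (hu : (u : Kˣ) = w ^ n) : residue O hO r u = 1 := by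
  have hw : w ∈ v.ker := (mem_ker_iff_ord_eq_zero v).2 (ord_eq_zero_of_add_eq_one hadd hwy hy)
  obtain rfl : u = ⟨w, hw⟩ ^ n := Subtype.ext hu
  rw [map_zpow, residue_eq_one_of_add_eq_one hker (u := ⟨w, hw⟩) hwy hy, one_zpow]

end Residue

section TameUnit

variable (v)

def tameUnit (f g : Kˣ) : Kˣ := (-1) ^ (ord v f * ord v g) * f ^ ord v g * g ^ (-ord v f)

lemma tameUnit_mem_ker (f g : Kˣ) : tameUnit v f g ∈ v.ker := by
  rw [mem_ker_iff_ord_eq_zero, tameUnit]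
  simp only [ord_mul, ord_zpow, ord_neg_one]
  ring

lemma tameUnit_mul_left (f₁ f₂ g : Kˣ) :
    tameUnit v (f₁ * f₂) g = tameUnit v f₁ g * tameUnit v f₂ g := by
  apply Additive.ofMul.injective
  simp only [tameUnit, ord_mul, ofMul_mul, ofMul_zpow]
  module

lemma tameUnit_mul_right (f g₁ g₂ : Kˣ) :
    tameUnit v f (g₁ * g₂) = tameUnit v f g₁ * tameUnit v f g₂ := by
  apply Additive.ofMul.injective
  simp only [tameUnit, ord_mul, ofMul_mul, ofMul_zpow]
  module

lemma coe_tameUnit (f g : Kˣ) :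
    (tameUnit v f g : K) =
      (-1 : K) ^ (ord v f * ord v g) * (f : K) ^ ord v g * (g : K) ^ (-ord v f) := by
  simp [tameUnit, Units.val_zpow_eq_zpow_val]

def tameKer (f g : Kˣ) : v.ker := ⟨tameUnit v f g, tameUnit_mem_ker v f g⟩

lemma tameKer_mul_left (f₁ f₂ g : Kˣ) :
    tameKer v (f₁ * f₂) g = tameKer v f₁ g * tameKer v f₂ g :=
  Subtype.ext (tameUnit_mul_left v f₁ f₂ g)

lemma tameKer_mul_right (f g₁ g₂ : Kˣ) :
    tameKer v f (g₁ * g₂) = tameKer v f g₁ * tameKer v f g₂ :=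
  Subtype.ext (tameUnit_mul_right v f g₁ g₂)

end TameUnit

section Steinberg

variable {O : Subring K} {hO : ∀ f : Kˣ, (f : K) ∈ O ↔ 0 ≤ ord v f} {r : O →+* k}

theorem residue_tameKer_one_sub
    (hadd : ∀ f g h : Kˣ, (f : K) + g = h → min (ord v f) (ord v g) ≤ ord v h)
    (hker : ∀ (f : Kˣ) (h : (f : K) ∈ O), r ⟨f, h⟩ = 0 ↔ 0 < ord v f)
    (a : Kˣ) (ha : (a : K) ≠ 1) :
    residue O hO r (tameKer v a (Units.mk0 (1 - a) (sub_ne_zero.2 (Ne.symm ha)))) = 1 := by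
  set b := Units.mk0 (1 - (a : K)) (sub_ne_zero.2 (Ne.symm ha))
  have hab : (a : K) + b = 1 := add_sub_cancel _ _
  have hb : ((1 : Kˣ) : K) + (-a : Kˣ) = b := by simp [b, sub_eq_add_neg]
  rcases lt_trichotomy (ord v a) 0 with hneg | hzero | hpos
  · have hba : ord v b = ord v a := by
      simpa using ord_eq_of_add_eq_of_lt hadd ((add_comm _ _).trans hb) (by simpa using hneg)
    -- `c = 1 - a⁻¹`, and `(-1) ^ (n * n) = (-1) ^ n` turns the symbol into `c ^ (-n)`.
    set c : Kˣ := -(b * a⁻¹)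
    have hc : (c : K) + (a⁻¹ : Kˣ) = 1 := by
      simp only [c, b, Units.val_neg, Units.val_mul, Units.val_inv_eq_inv_val, Units.val_mk0]
      field_simp
      ring
    refine residue_eq_one_of_eq_zpow hadd hker hc (by simpa using hneg) (n := -ord v a) ?_
    have hsign : (-1 : Kˣ) ^ (ord v a * ord v a) = (-1) ^ (-ord v a) := by
      have h := (Int.even_mul_succ_self (ord v a)).neg_one_zpow (α := Kˣ)
      rw [mul_add, mul_one, zpow_add] at h
      rw [eq_inv_of_mul_eq_one_left h, zpow_neg]
    simp only [tameKer, tameUnit, hba, hsign, c]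
    rw [← neg_one_mul (b * a⁻¹), mul_zpow, mul_zpow, inv_zpow', neg_neg, mul_assoc,
      mul_comm (a ^ _)]
  · have hb0 : 0 ≤ ord v b := by simpa [hzero] using hadd _ _ _ hb
    rcases hb0.eq_or_lt with hb0 | hbpos
    · have : tameKer v a b = 1 := Subtype.ext (by simp [tameKer, tameUnit, hzero, ← hb0])
      rw [this, map_one]
    · exact residue_eq_one_of_eq_zpow hadd hker hab hbpos (n := ord v b)
        (by simp [tameKer, tameUnit, hzero])
  · have hb0 : ord v b = 0 := by
      simpa using ord_eq_of_add_eq_of_lt hadd hb (by simpa using hpos)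
    exact residue_eq_one_of_eq_zpow hadd hker (add_comm (a : K) b ▸ hab) hpos (n := -ord v a)
      (by simp [tameKer, tameUnit, hb0])

end Steinberg

section Symbol

variable (v) (O : Subring K) (hO : ∀ f : Kˣ, (f : K) ∈ O ↔ 0 ≤ ord v f) (r : O →+* k)

noncomputable def tamePairing : Additive Kˣ →+ Additive Kˣ →+ Additive kˣ :=
  AddMonoidHom.mk'
    (fun f => AddMonoidHom.mk' (fun g => .ofMul (residue O hO r (tameKer v f.toMul g.toMul)))
      fun g₁ g₂ => by simp only [toMul_add, tameKer_mul_right, map_mul, ofMul_mul])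
    fun f₁ f₂ => AddMonoidHom.ext fun g => by
      simp only [toMul_add, tameKer_mul_left, map_mul, ofMul_mul, AddMonoidHom.mk'_apply,
        AddMonoidHom.add_apply]

noncomputable def tameTensor : Additive Kˣ ⊗[ℤ] Additive Kˣ →+ Additive kˣ :=
  TensorProduct.liftAddHom (tamePairing v O hO r) fun n f g => by
    rw [map_zsmul, AddMonoidHom.zsmul_apply, map_zsmul]

lemma K2Rel_le_ker_tameTensor
    (hadd : ∀ f g h : Kˣ, (f : K) + g = h → min (ord v f) (ord v g) ≤ ord v h)
    (hker : ∀ (f : Kˣ) (h : (f : K) ∈ O), r ⟨f, h⟩ = 0 ↔ 0 < ord v f) :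
    K2Rel K ≤ LinearMap.ker (tameTensor v O hO r).toIntLinearMap := by
  rw [K2Rel, Submodule.span_le]
  rintro _ ⟨a, ha, rfl⟩
  simp only [SetLike.mem_coe, LinearMap.mem_ker, AddMonoidHom.coe_toIntLinearMap, tameTensor,
    TensorProduct.liftAddHom_tmul, tamePairing, AddMonoidHom.mk'_apply, toMul_ofMul,
    residue_tameKer_one_sub hadd hker a ha, ofMul_one]

noncomputable def tameSymbol
    (hadd : ∀ f g h : Kˣ, (f : K) + g = h → min (ord v f) (ord v g) ≤ ord v h)
    (hker : ∀ (f : Kˣ) (h : (f : K) ∈ O), r ⟨f, h⟩ = 0 ↔ 0 < ord v f) :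
    K2 K →+ Additive kˣ :=
  ((K2Rel K).liftQ (tameTensor v O hO r).toIntLinearMap
    (K2Rel_le_ker_tameTensor v O hO r hadd hker)).toAddMonoidHom

lemma tameSymbol_symbol
    (hadd : ∀ f g h : Kˣ, (f : K) + g = h → min (ord v f) (ord v g) ≤ ord v h)
    (hker : ∀ (f : Kˣ) (h : (f : K) ∈ O), r ⟨f, h⟩ = 0 ↔ 0 < ord v f) (f g : Kˣ) :
    tameSymbol v O hO r hadd hker (K2.symbol f g) = .ofMul (residue O hO r (tameKer v f g)) :=
  rfl

end Symbol

end TameSymbol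

theorem tame_symbol_well_defined_general
    {K k : Type*} [Field K] [Field k]
    (v : Kˣ →* Multiplicative ℤ)
    (hadd : ∀ f g h : Kˣ, (f : K) + (g : K) = (h : K) →
      min (Multiplicative.toAdd (v f)) (Multiplicative.toAdd (v g)) ≤
        Multiplicative.toAdd (v h))
    (O : Subring K) (hO : ∀ f : Kˣ, (f : K) ∈ O ↔ 0 ≤ Multiplicative.toAdd (v f))
    (r : O →+* k)
    (hker : ∀ (f : Kˣ) (h : (f : K) ∈ O),
      r ⟨(f : K), h⟩ = 0 ↔ 0 < Multiplicative.toAdd (v f)) :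
    ∃ d : K2 K →+ Additive kˣ,
      ∀ (f g : Kˣ)
        (h : (-1 : K) ^ (Multiplicative.toAdd (v f) * Multiplicative.toAdd (v g)) *
              (f : K) ^ (Multiplicative.toAdd (v g)) *
              (g : K) ^ (-(Multiplicative.toAdd (v f))) ∈ O),
        ((Additive.toMul (d (K2.symbol f g)) : kˣ) : k) =
          r ⟨(-1 : K) ^ (Multiplicative.toAdd (v f) * Multiplicative.toAdd (v g)) *
              (f : K) ^ (Multiplicative.toAdd (v g)) *
              (g : K) ^ (-(Multiplicative.toAdd (v f))), h⟩ := by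
  refine ⟨TameSymbol.tameSymbol v O hO r hadd hker, fun f g h => ?_⟩
  rw [TameSymbol.tameSymbol_symbol, toMul_ofMul, TameSymbol.coe_residue]
  exact congrArg r (Subtype.ext (TameSymbol.coe_tameUnit v f g))

/-- Let `K` be a field with a (normalized) discrete valuation `v : Kˣ → ℤ`, valuation
ring `O` and residue field `k` (with residue map `r : O → k` whose kernel consists of
the elements of positive valuation).  The tame symbol
`(f,g) ↦ (-1)^{v(f)v(g)} f^{v(g)} g^{-v(f)} mod m` is bimultiplicative and kills the
pairs `(a, 1-a)`, hence factors through the Milnor K-group: there is a homomorphism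
`∂ : K₂(K) → kˣ` computing the tame symbol on each symbol `{f,g}`. -/
theorem tame_symbol_well_defined
    {K k : Type*} [Field K] [Field k]
    (v : Kˣ →* Multiplicative ℤ) (hv : Function.Surjective v)
    (hadd : ∀ f g h : Kˣ, (f : K) + (g : K) = (h : K) →
      min (Multiplicative.toAdd (v f)) (Multiplicative.toAdd (v g)) ≤
        Multiplicative.toAdd (v h))
    (O : Subring K) (hO : ∀ f : Kˣ, (f : K) ∈ O ↔ 0 ≤ Multiplicative.toAdd (v f))
    (r : O →+* k) (hr : Function.Surjective r)
    (hker : ∀ (f : Kˣ) (h : (f : K) ∈ O),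
      r ⟨(f : K), h⟩ = 0 ↔ 0 < Multiplicative.toAdd (v f)) :
    ∃ d : K2 K →+ Additive kˣ,
      ∀ (f g : Kˣ)
        (h : (-1 : K) ^ (Multiplicative.toAdd (v f) * Multiplicative.toAdd (v g)) *
              (f : K) ^ (Multiplicative.toAdd (v g)) *
              (g : K) ^ (-(Multiplicative.toAdd (v f))) ∈ O),
        ((Additive.toMul (d (K2.symbol f g)) : kˣ) : k) =
          r ⟨(-1 : K) ^ (Multiplicative.toAdd (v f) * Multiplicative.toAdd (v g)) *
              (f : K) ^ (Multiplicative.toAdd (v g)) *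
              (g : K) ^ (-(Multiplicative.toAdd (v f))), h⟩ :=
  tame_symbol_well_defined_general v hadd O hO r hker
end
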